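/- Let (Ω, ℱ, ℙ) be a probability space, T : Ω → ℝ a random variable with T ∈ {−1, 1} almost surely and ℙ(T = 1) = p ∈ (0,1), and Y : Ω → ℝ integrable, with arm means μ₁, μ₋₁ defined by E[Y·1_{T=1}] = p·μ₁ and E[Y·1_{T=−1}] = (1−p)·μ₋₁. Set τ₀ = μ₁ − μ₋₁. Then for every real number g, E[(T − 2p + 1)·(Y − g − (T/2)·τ₀)] = 0. -/

import Mathlib

/-!
On the arm `T = 1` the score is `(2 - 2p)(Y - g - τ₀/2)`, and on the arm `T = -1` it is
`-2p(Y - g + τ₀/2)`. Integrating each arm with `E[Y·1_{T=1}] = pμ₁`, `E[Y·1_{T=-1}] = (1-p)μ₋₁`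
and `ℙ(T = 1) = p`, `ℙ(T = -1) = 1 - p` gives `2p(1-p)(μ₁ - μ₋₁ - τ₀) = 0`; the constant `g`
cancels between the arms because `(2 - 2p)·p = 2p·(1 - p)`.
-/

open MeasureTheory

section TwoArms

variable {Ω : Type*} [MeasurableSpace Ω] {μ : Measure Ω} {s t : Set Ω}

lemma integral_eq_setIntegral_add_setIntegral_of_ae_mem_union {E : Type*}
    [NormedAddCommGroup E] [NormedSpace ℝ E] {f : Ω → E} (hst : Disjoint s t)
    (ht : MeasurableSet t) (hcover : ∀ᵐ ω ∂μ, ω ∈ s ∪ t)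
    (hfs : IntegrableOn f s μ) (hft : IntegrableOn f t μ) :
    ∫ ω, f ω ∂μ = ∫ ω in s, f ω ∂μ + ∫ ω in t, f ω ∂μ := by
  rw [← setIntegral_union hst ht hfs hft, Measure.restrict_eq_self_of_ae_mem hcover]

lemma measureReal_add_measureReal_of_ae_mem_union [IsProbabilityMeasure μ]
    (hst : Disjoint s t) (ht : MeasurableSet t) (hcover : ∀ᵐ ω ∂μ, ω ∈ s ∪ t) :
    μ.real s + μ.real t = 1 := by
  rw [← measureReal_union hst ht, ← probReal_univ (μ := μ)]
  exact measureReal_congr (Filter.eventuallyEq_univ.mpr hcover)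

lemma setIntegral_const_mul_sub_const [IsFiniteMeasure μ] {Y : Ω → ℝ}
    (hY : IntegrableOn Y s μ) (a c : ℝ) :
    ∫ ω in s, a * (Y ω - c) ∂μ = a * (∫ ω in s, Y ω ∂μ - μ.real s * c) := by
  rw [integral_const_mul, integral_sub hY (integrable_const c), setIntegral_const, smul_eq_mul]

end TwoArms

/-- Remark 4: the score (T − 2p + 1)·(Y − g − (T/2)·τ₀) has mean zero for any
augmentation constant g. -/
theorem stmt15 {Ω : Type*} [MeasurableSpace Ω] (P : Measure Ω) [IsProbabilityMeasure P]
    (p μ1 μm1 τ0 : ℝ) (hp : p ∈ Set.Ioo (0 : ℝ) 1)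
    (T Y : Ω → ℝ) (hT : Measurable T)
    (hT1 : ∀ᵐ ω ∂P, T ω = 1 ∨ T ω = -1)
    (hpT : P {ω | T ω = 1} = ENNReal.ofReal p)
    (hY : Integrable Y P)
    (hμ1 : ∫ ω in {ω | T ω = 1}, Y ω ∂P = p * μ1)
    (hμm1 : ∫ ω in {ω | T ω = -1}, Y ω ∂P = (1 - p) * μm1)
    (hτ : τ0 = μ1 - μm1) :
    ∀ g : ℝ,
      ∫ ω, (T ω - 2 * p + 1) * (Y ω - g - (T ω / 2) * τ0) ∂P = 0 := by
  intro g
  set A : Set Ω := {ω | T ω = 1}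
  set B : Set Ω := {ω | T ω = -1}
  have hA : MeasurableSet A := hT (measurableSet_singleton 1)
  have hB : MeasurableSet B := hT (measurableSet_singleton (-1))
  have hAB : Disjoint A B := Set.disjoint_left.mpr fun ω h1 h2 => by
    simp only [A, B, Set.mem_ofPred_eq] at h1 h2; linarith
  have hcover : ∀ᵐ ω ∂P, ω ∈ A ∪ B := hT1
  have hPA : P.real A = p := by rw [measureReal_def, hpT, ENNReal.toReal_ofReal hp.1.le]
  have hPB : P.real B = 1 - p := by
    linarith [measureReal_add_measureReal_of_ae_mem_union hAB hB hcover]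
  have on_A : Set.EqOn (fun ω => (T ω - 2 * p + 1) * (Y ω - g - (T ω / 2) * τ0))
      (fun ω => (2 - 2 * p) * (Y ω - (g + τ0 / 2))) A := fun ω (h : T ω = 1) => by
    simp only [h]; ring
  have on_B : Set.EqOn (fun ω => (T ω - 2 * p + 1) * (Y ω - g - (T ω / 2) * τ0))
      (fun ω => -(2 * p) * (Y ω - (g - τ0 / 2))) B := fun ω (h : T ω = -1) => by
    simp only [h]; ring
  have arm_integrable (a c : ℝ) {s : Set Ω} : IntegrableOn (fun ω => a * (Y ω - c)) s P :=
    ((hY.sub (integrable_const c)).const_mul a).integrableOn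
  rw [integral_eq_setIntegral_add_setIntegral_of_ae_mem_union hAB hB hcover
      ((arm_integrable _ _).congr_fun on_A.symm hA) ((arm_integrable _ _).congr_fun on_B.symm hB),
    setIntegral_congr_fun hA on_A, setIntegral_congr_fun hB on_B,
    setIntegral_const_mul_sub_const hY.integrableOn, setIntegral_const_mul_sub_const hY.integrableOn,
    hμ1, hμm1, hPA, hPB, hτ]
  ring
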